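/- Under the standing assumption and the quantile assumption, the double-obstacle ODE admits a unique solution in C²⁻[m₀,1]: if Ψ₁, Ψ₂ ∈ C²⁻[m₀,1] both solve the double-obstacle ODE, then Ψ₁ = Ψ₂ on [m₀,1]. -/

import Mathlib

open MeasureTheory Set Filter Topology
open scoped ENNReal

noncomputable section

/-- The admissible set 𝒜: functions `H : [0,∞) → [0,∞)` with `H 0 = 0` that are
nondecreasing and 1-Lipschitz (extended to `ℝ`, with the conditions imposed on `[0,∞)`). -/
def Adm : Set (ℝ → ℝ) :=
  {H | H 0 = 0 ∧ (∀ z, 0 ≤ z → 0 ≤ H z) ∧ MonotoneOn H (Set.Ici 0) ∧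
    LipschitzOnWith 1 H (Set.Ici 0)}

/-- The objective functional
`J_a(H) = ∫_{(0,∞)} ((a/2)·H² + H) dμ_F − (1+θ)·∫_{(0,∞)} H dμ_F̂`, valued in `EReal`. -/
def Jfun (μF μFhat : Measure ℝ) (θ a : ℝ) (H : ℝ → ℝ) : EReal :=
  ((∫⁻ z in Set.Ioi (0:ℝ), ENNReal.ofReal (a / 2 * H z ^ 2 + H z) ∂μF : ℝ≥0∞) : EReal)
    - ((ENNReal.ofReal (1 + θ) * ∫⁻ z in Set.Ioi (0:ℝ), ENNReal.ofReal (H z) ∂μFhat : ℝ≥0∞) : EReal)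

/-- `v(a) = inf_{H ∈ 𝒜} J_a(H)`. -/
def vfun (μF μFhat : Measure ℝ) (θ : ℝ) (a : ℝ) : EReal :=
  ⨅ H ∈ Adm, Jfun μF μFhat θ a H

/-- Ψ belongs to `C²⁻[m0, 1]`: Ψ is differentiable on `[m0,1]` with derivative `Ψd`,
and `Ψd` is absolutely continuous on `[m0,1]` with (a.e.) derivative `Ψdd`. -/
def IsC2m (m0 : ℝ) (Ψ Ψd Ψdd : ℝ → ℝ) : Prop :=
  (∀ p ∈ Set.Icc m0 1, HasDerivWithinAt Ψ (Ψd p) (Set.Icc m0 1) p) ∧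
  IntegrableOn Ψdd (Set.Icc m0 1) ∧
  (∀ p ∈ Set.Icc m0 1, Ψd p = Ψd m0 + ∫ t in m0..p, Ψdd t)

/-- The double-obstacle ODE:
`min{max{Ψ'' − a*·h, 1 − p − (1+θ0)·g(1−p) − Ψ}, Ψ''} = 0` a.e. on `(m0,1)`, with
boundary conditions `Ψ(1) = 0` and `Ψ'(m0) = 0`. -/
def SolvesDO (m0 astar θ0 : ℝ) (g h Ψ Ψd Ψdd : ℝ → ℝ) : Prop :=
  (∀ᵐ p ∂(volume.restrict (Set.Ioo m0 1)),
      min (max (Ψdd p - astar * h p) (1 - p - (1 + θ0) * g (1 - p) - Ψ p)) (Ψdd p) = 0) ∧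
  Ψ 1 = 0 ∧ Ψd m0 = 0

/-! With `W = Ψ₁ - Ψ₂`, the obstacle structure forces `W'' ≥ 0` a.e. on `{W > 0}`: there `Ψ₁` lies
strictly above `Ψ₂`, so either `Ψ₂` lies strictly below the obstacle `1 - p - (1+θ₀)g(1-p)`,
forcing `Ψ₂'' = 0 ≤ Ψ₁''`, or `Ψ₁` lies strictly above it, forcing `Ψ₂'' ≤ a*h ≤ Ψ₁''`. If `W` had a positive maximum at `p₁`, then `W'(p₁) = 0`, by Fermat's rule
inside or by the Neumann condition at `m₀`; `W'` stays nonnegative up to the first zero `β` of `W`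
(which exists since `W(1) = 0`), so `W(β) ≥ W(p₁) > 0`, a contradiction. Hence `Ψ₁ ≤ Ψ₂`, and by
symmetry `Ψ₁ = Ψ₂`. -/

theorem le_of_min_max_sub_eq_zero {c o x₁ y₁ x₂ y₂ : ℝ} (hc : 0 ≤ c)
    (h₁ : min (max (x₁ - c) (o - y₁)) x₁ = 0) (h₂ : min (max (x₂ - c) (o - y₂)) x₂ = 0)
    (hy : y₂ < y₁) : x₂ ≤ x₁ := by
  rw [min_def, max_def] at h₁ h₂
  split_ifs at h₁ h₂ <;> linarith

theorem exists_first_nonpos {f : ℝ → ℝ} {a b : ℝ} (hab : a ≤ b) (hf : ContinuousOn f (Icc a b))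
    (hb : f b ≤ 0) : ∃ c ∈ Icc a b, f c ≤ 0 ∧ ∀ x ∈ Ico a c, 0 < f x := by
  have hS : IsCompact (Icc a b ∩ f ⁻¹' Iic 0) :=
    isCompact_Icc.of_isClosed_subset
      (hf.preimage_isClosed_of_isClosed isClosed_Icc isClosed_Iic) inter_subset_left
  obtain ⟨c, ⟨hc, hfc⟩, hleast⟩ := hS.exists_isLeast ⟨b, ⟨hab, le_rfl⟩, hb⟩
  refine ⟨c, hc, hfc, fun x hx => ?_⟩
  by_contra! hfx
  exact hx.2.not_ge (hleast ⟨⟨hx.1, hx.2.le.trans hc.2⟩, hfx⟩)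

namespace IsC2m

variable {m0 : ℝ} {Ψ Ψd Ψdd : ℝ → ℝ}

theorem continuousOn (hΨ : IsC2m m0 Ψ Ψd Ψdd) : ContinuousOn Ψ (Icc m0 1) :=
  fun p hp => (hΨ.1 p hp).continuousWithinAt

theorem hasDerivAt (hΨ : IsC2m m0 Ψ Ψd Ψdd) {p : ℝ} (hp : p ∈ Ioo m0 1) :
    HasDerivAt Ψ (Ψd p) p :=
  (hΨ.1 p (Ioo_subset_Icc_self hp)).hasDerivAt (Icc_mem_nhds hp.1 hp.2)

theorem intervalIntegrable (hΨ : IsC2m m0 Ψ Ψd Ψdd) {q r : ℝ} (hq : q ∈ Icc m0 1)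
    (hr : r ∈ Icc m0 1) : IntervalIntegrable Ψdd volume q r :=
  (hΨ.2.1.mono_set (uIcc_subset_Icc hq hr)).intervalIntegrable

theorem deriv_sub_deriv (hΨ : IsC2m m0 Ψ Ψd Ψdd) {q r : ℝ} (hq : q ∈ Icc m0 1)
    (hr : r ∈ Icc m0 1) : Ψd r - Ψd q = ∫ t in q..r, Ψdd t := by
  have hm0 : m0 ∈ Icc m0 1 := ⟨le_rfl, hq.1.trans hq.2⟩
  rw [hΨ.2.2 r hr, hΨ.2.2 q hq, ← intervalIntegral.integral_interval_sub_left
    (hΨ.intervalIntegrable hm0 hr) (hΨ.intervalIntegrable hm0 hq)]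
  ring

theorem sub {Φ Φd Φdd : ℝ → ℝ} (hΨ : IsC2m m0 Ψ Ψd Ψdd) (hΦ : IsC2m m0 Φ Φd Φdd) :
    IsC2m m0 (Ψ - Φ) (Ψd - Φd) (Ψdd - Φdd) := by
  refine ⟨fun p hp => (hΨ.1 p hp).sub (hΦ.1 p hp), hΨ.2.1.sub hΦ.2.1, fun p hp => ?_⟩
  have hm0 : m0 ∈ Icc m0 1 := ⟨le_rfl, hp.1.trans hp.2⟩
  simp only [Pi.sub_apply]
  rw [intervalIntegral.integral_sub (hΨ.intervalIntegrable hm0 hp)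
    (hΦ.intervalIntegrable hm0 hp), hΨ.2.2 p hp, hΦ.2.2 p hp]
  ring

theorem nonpos_of_ae_convex (hΨ : IsC2m m0 Ψ Ψd Ψdd)
    (hconv : ∀ᵐ p ∂(volume.restrict (Ioo m0 1)), 0 < Ψ p → 0 ≤ Ψdd p)
    (hd : Ψd m0 = 0) (h1 : Ψ 1 ≤ 0) : ∀ p ∈ Icc m0 1, Ψ p ≤ 0 := by
  by_contra! hpos
  obtain ⟨p₀, hp₀, hΨp₀⟩ := hpos
  obtain ⟨p₁, hp₁, hmax⟩ := isCompact_Icc.exists_isMaxOn ⟨p₀, hp₀⟩ hΨ.continuousOn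
  have hΨp₁ : 0 < Ψ p₁ := hΨp₀.trans_le (hmax hp₀)
  have hp₁1 : p₁ < 1 := hp₁.2.lt_of_ne (by rintro rfl; linarith)
  have hdp₁ : Ψd p₁ = 0 := by
    rcases hp₁.1.eq_or_lt with h | h
    · rwa [← h]
    · exact (hmax.isLocalMax (Icc_mem_nhds h hp₁1)).hasDerivAt_eq_zero (hΨ.hasDerivAt ⟨h, hp₁1⟩)
  obtain ⟨β, hβ, hΨβ, hposβ⟩ :=
    exists_first_nonpos hp₁1.le (hΨ.continuousOn.mono (Icc_subset_Icc hp₁.1 le_rfl)) h1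
  have hsub : Icc p₁ β ⊆ Icc m0 1 := Icc_subset_Icc hp₁.1 hβ.2
  have hderiv_nonneg : ∀ q ∈ Icc p₁ β, 0 ≤ Ψd q := by
    intro q hq
    have hΨdq := hΨ.deriv_sub_deriv hp₁ (hsub hq)
    rw [hdp₁, sub_zero] at hΨdq
    rw [hΨdq]
    refine intervalIntegral.integral_nonneg_of_ae_restrict hq.1 ?_
    rw [← Measure.restrict_congr_set Ioo_ae_eq_Icc]
    filter_upwards [ae_restrict_of_ae_restrict_of_subset (Ioo_subset_Ioo hp₁.1 (hsub hq).2) hconv,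
      ae_restrict_mem measurableSet_Ioo] with x hx hxI
    exact hx (hposβ x ⟨hxI.1.le, hxI.2.trans_le hq.2⟩)
  have hmono : MonotoneOn Ψ (Icc p₁ β) := by
    refine monotoneOn_of_hasDerivWithinAt_nonneg (convex_Icc _ _) (hΨ.continuousOn.mono hsub)
      (fun x hx => ?_) (fun x hx => hderiv_nonneg x (interior_subset hx))
    rw [interior_Icc] at hx ⊢
    exact (hΨ.hasDerivAt ⟨hp₁.1.trans_lt hx.1, hx.2.trans_le hβ.2⟩).hasDerivWithinAt
  linarith [hmono ⟨le_rfl, hβ.1⟩ ⟨hβ.1, le_rfl⟩ hβ.1]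

end IsC2m

theorem SolvesDO.le {m0 astar θ0 : ℝ} {g h Ψ₁ Ψ₁d Ψ₁dd Ψ₂ Ψ₂d Ψ₂dd : ℝ → ℝ}
    (hh : ∀ᵐ p ∂(volume.restrict (Ioo m0 1)), 0 ≤ astar * h p)
    (hC₁ : IsC2m m0 Ψ₁ Ψ₁d Ψ₁dd) (hD₁ : SolvesDO m0 astar θ0 g h Ψ₁ Ψ₁d Ψ₁dd)
    (hC₂ : IsC2m m0 Ψ₂ Ψ₂d Ψ₂dd) (hD₂ : SolvesDO m0 astar θ0 g h Ψ₂ Ψ₂d Ψ₂dd) :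
    ∀ p ∈ Icc m0 1, Ψ₁ p ≤ Ψ₂ p := by
  have hW := (hC₁.sub hC₂).nonpos_of_ae_convex ?_ (by simp [hD₁.2.2, hD₂.2.2])
    (by simp [hD₁.2.1, hD₂.2.1])
  · exact fun p hp => sub_nonpos.1 (hW p hp)
  filter_upwards [hD₁.1, hD₂.1, hh] with p h₁ h₂ hp hW
  exact sub_nonneg.2 (le_of_min_max_sub_eq_zero hp h₁ h₂ (sub_pos.1 hW))

theorem stmt_17_general
    (F : StieltjesFunction ℝ) (g : ℝ → ℝ) (θ0 : ℝ)
    (astar : ℝ) (hastar_pos : 0 < astar)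
    (h : ℝ → ℝ)
    (hh_pos : ∀ᵐ p ∂(volume.restrict (Set.Ioo (F 0) 1)), 0 < h p)
    (Ψ₁ Ψ₁d Ψ₁dd Ψ₂ Ψ₂d Ψ₂dd : ℝ → ℝ)
    (hC2₁ : IsC2m (F 0) Ψ₁ Ψ₁d Ψ₁dd)
    (hDO₁ : SolvesDO (F 0) astar θ0 g h Ψ₁ Ψ₁d Ψ₁dd)
    (hC2₂ : IsC2m (F 0) Ψ₂ Ψ₂d Ψ₂dd)
    (hDO₂ : SolvesDO (F 0) astar θ0 g h Ψ₂ Ψ₂d Ψ₂dd) :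
    ∀ p ∈ Set.Icc (F 0) 1, Ψ₁ p = Ψ₂ p := by
  have hh : ∀ᵐ p ∂(volume.restrict (Ioo (F 0) 1)), 0 ≤ astar * h p :=
    hh_pos.mono fun p hp => (mul_pos hastar_pos hp).le
  exact fun p hp => le_antisymm (hDO₁.le hh hC2₁ hC2₂ hDO₂ p hp) (hDO₂.le hh hC2₂ hC2₁ hDO₁ p hp)

/-- the double-obstacle ODE has a unique solution in C²⁻[m0,1]. -/
theorem stmt_17
    (F Fhat : StieltjesFunction ℝ) (g : ℝ → ℝ) (θ0 θ : ℝ)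
    (hF_neg : ∀ z : ℝ, z < 0 → F z = 0)
    (hF_top : Tendsto (fun z => F z) atTop (nhds 1))
    (hg_mono : MonotoneOn g (Set.Icc 0 1))
    (hg_left : ∀ p ∈ Set.Ioc (0:ℝ) 1, Tendsto g (nhdsWithin p (Set.Iio p)) (nhds (g p)))
    (hg_zero : g 0 = 0)
    (hg_zero' : Tendsto g (nhdsWithin 0 (Set.Ioi 0)) (nhds 0))
    (hg_one : g 1 = 1)
    (hg_pos : 0 < g (1 - F 0))
    (hθ0 : -1 < θ0)
    (hθ : θ = (1 + θ0) * g (1 - F 0) - 1)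
    (hFhat : ∀ z : ℝ, Fhat z = if z < 0 then 0 else 1 - g (1 - F z) / g (1 - F 0))
    (hFhat_top : Tendsto (fun z => Fhat z) atTop (nhds 1))
    (prem : ℝ) (hprem_pos : 0 < prem)
    (hEZ_pos : 0 < ∫⁻ z in Set.Ioi (0:ℝ), ENNReal.ofReal z ∂F.measure)
    (hEZ_lt : (∫⁻ z in Set.Ioi (0:ℝ), ENNReal.ofReal z ∂F.measure) < ENNReal.ofReal prem)
    (hprem_lt : ENNReal.ofReal prem <
        ENNReal.ofReal (1 + θ) * ∫⁻ z in Set.Ioi (0:ℝ), ENNReal.ofReal z ∂Fhat.measure)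
    (hfin : ENNReal.ofReal (1 + θ) *
        (∫⁻ z in Set.Ioi (0:ℝ), ENNReal.ofReal z ∂Fhat.measure) < ⊤)
    (astar : ℝ) (hastar_pos : 0 < astar)
    (hastar : vfun F.measure Fhat.measure θ astar =
        ((prem - (ENNReal.ofReal (1 + θ) *
          (∫⁻ z in Set.Ioi (0:ℝ), ENNReal.ofReal z ∂Fhat.measure)).toReal : ℝ) : EReal))
    (hm0 : F 0 < 1)
    (Finv h : ℝ → ℝ)
    (hFinv_def : ∀ p ∈ Set.Ioc (0:ℝ) 1, Finv p = sInf {z : ℝ | 0 ≤ z ∧ p ≤ F z})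
    (hFinv_zero : Finv 0 = 0)
    (hFinv_lim : Tendsto Finv (nhdsWithin 0 (Set.Ioi 0)) (nhds (Finv 0)))
    (hFinv_AC : ∀ p ∈ Set.Icc (0:ℝ) 1, Finv p = ∫ t in (0:ℝ)..p, h t)
    (hh_int : IntegrableOn h (Set.Icc 0 1))
    (hh_pos : ∀ᵐ p ∂(volume.restrict (Set.Ioo (F 0) 1)), 0 < h p)
    (Ψ₁ Ψ₁d Ψ₁dd Ψ₂ Ψ₂d Ψ₂dd : ℝ → ℝ)
    (hC2₁ : IsC2m (F 0) Ψ₁ Ψ₁d Ψ₁dd)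
    (hDO₁ : SolvesDO (F 0) astar θ0 g h Ψ₁ Ψ₁d Ψ₁dd)
    (hC2₂ : IsC2m (F 0) Ψ₂ Ψ₂d Ψ₂dd)
    (hDO₂ : SolvesDO (F 0) astar θ0 g h Ψ₂ Ψ₂d Ψ₂dd) :
    ∀ p ∈ Set.Icc (F 0) 1, Ψ₁ p = Ψ₂ p :=
  stmt_17_general F g θ0 astar hastar_pos h hh_pos Ψ₁ Ψ₁d Ψ₁dd Ψ₂ Ψ₂d Ψ₂dd hC2₁ hDO₁ hC2₂ hDO₂
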